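/- arXiv:1901.09319 — 2 statements merged into one kernel-verified Lean document; each statement's English description precedes it below -/
import Mathlib

section
/- Let R[x₁, …, xₙ] be a polynomial ring over a field, B a commutative R-algebra, and K ⊆ B ⊗ R[x₁,…,xₙ] a subset stable under both the transposition operators s_k and the difference operators ∂_k (for all 1 ≤ k < n). Let f(t) = Σ_{j=0}^{d} a_j t^j be a polynomial with coefficients a_j ∈ B, with d < n. If f(x₁) ∈ K then a_d ∈ K, where a_d is obtained as (−1)^d ∂_d ∂_{d−1} ⋯ ∂_1 f(x₁). -/
/-!
Write `f = ∑_{j ≤ d} c_j t^j` and let `h_j` be the complete homogeneous symmetric polynomials.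
The divided difference `f[x₀, …, xₘ] = ∑_j c_{j+m} h_j(x₀, …, xₘ)` lies in `K` for every `m ≤ d`:
since `∂ₘ sₘ = -∂ₘ`, the identity `h_{j+1}(y, t) - h_{j+1}(z, t) = (y - z) h_j(y, z, t)` gives
`∂ₘ sₘ f[x₀, …, xₘ] = f[x₀, …, x_{m+1}]`, where `xₘ - x_{m+1}` may be cancelled because it is a
non-zero-divisor. At `m = d` the divided difference is the constant `c_d`.
-/

open MvPolynomial

namespace List

variable {R S : Type*} [CommRing R] [CommRing S]

/-- `MvPolynomial.hsymm` evaluated at the entries of the list. -/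
def hsymm : List R → ℕ → R
  | [], 0 => 1
  | [], _ + 1 => 0
  | _ :: _, 0 => 1
  | y :: t, e + 1 => t.hsymm (e + 1) + y * (y :: t).hsymm e

@[simp]
lemma hsymm_zero (l : List R) : l.hsymm 0 = 1 := by
  cases l <;> rw [hsymm]

lemma hsymm_cons_succ (y : R) (t : List R) (e : ℕ) :
    (y :: t).hsymm (e + 1) = t.hsymm (e + 1) + y * (y :: t).hsymm e := by
  rw [hsymm]

lemma hsymm_singleton (y : R) (e : ℕ) : [y].hsymm e = y ^ e := by
  induction e with
  | zero => simp
  | succ e ih => rw [hsymm_cons_succ, ih, hsymm, zero_add, pow_succ']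

lemma map_hsymm (φ : R →+* S) (l : List R) (e : ℕ) : φ (l.hsymm e) = (l.map φ).hsymm e := by
  induction l, e using hsymm.induct with
  | case1 => simp
  | case2 => simp [hsymm]
  | case3 => simp
  | case4 y t e ih₁ ih₂ => simp only [hsymm_cons_succ, map_add, map_mul, ih₁, ih₂, map_cons]

lemma hsymm_cons_sub_hsymm_cons (y z : R) (t : List R) (e : ℕ) :
    (y :: t).hsymm (e + 1) - (z :: t).hsymm (e + 1) = (y - z) * (y :: z :: t).hsymm e := by
  induction e with
  | zero => simp only [hsymm_cons_succ, hsymm_zero]; ring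
  | succ e ih =>
    rw [hsymm_cons_succ y t, hsymm_cons_succ z t, hsymm_cons_succ y (z :: t)]
    linear_combination y * ih

lemma hsymm_cons_cons_comm (y z : R) (t : List R) (e : ℕ) :
    (y :: z :: t).hsymm e = (z :: y :: t).hsymm e := by
  induction e with
  | zero => simp
  | succ e ih =>
    rw [hsymm_cons_succ y (z :: t), hsymm_cons_succ z (y :: t)]
    linear_combination z * ih - hsymm_cons_sub_hsymm_cons y z t e

lemma sum_mul_hsymm_cons_sub (a : ℕ → R) (N : ℕ) (y z : R) (t : List R) :
    ∑ j ∈ Finset.range (N + 1), a j * (y :: t).hsymm j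
      - ∑ j ∈ Finset.range (N + 1), a j * (z :: t).hsymm j
      = (y - z) * ∑ j ∈ Finset.range N, a (j + 1) * (z :: y :: t).hsymm j := by
  rw [← Finset.sum_sub_distrib, Finset.sum_range_succ', Finset.mul_sum]
  simp only [hsymm_zero, sub_self, add_zero, ← mul_sub, hsymm_cons_sub_hsymm_cons,
    hsymm_cons_cons_comm y z]
  exact Finset.sum_congr rfl fun _ _ => by ring

end List

namespace MvPolynomial

lemma isLeftRegular_X_sub_X {σ R : Type*} [CommRing R] {i j : σ} (hij : i ≠ j) :
    IsLeftRegular (X i - X j : MvPolynomial σ R) := by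
  classical
  let e := (renameEquiv R (Equiv.optionSubtypeNe i).symm).trans (optionEquivLeft R _)
  have hXi : e (X i) = Polynomial.X := by simp [e]
  have hXj : e (X j) = Polynomial.C (X ⟨j, hij.symm⟩) := by
    simp [e, hij.symm]
  have hreg : IsLeftRegular (e (X i - X j)) := by
    rw [map_sub, hXi, hXj]
    exact (Polynomial.monic_X_sub_C _).isRegular.left
  intro u v h
  exact e.injective (hreg (by simpa only [← map_mul] using congrArg e h))

lemma rename_swap_rename_swap {σ R : Type*} [CommRing R] [DecidableEq σ] (i j : σ)
    (p : MvPolynomial σ R) : rename (Equiv.swap i j) (rename (Equiv.swap i j) p) = p := by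
  rw [rename_rename, ← Equiv.coe_trans, Equiv.swap_swap, Equiv.coe_refl, rename_id_apply]

end MvPolynomial

section DividedDifference

variable {n : ℕ} {B : Type*} [CommRing B]

variable (n B) in
/-- The list `[xₘ₋₁, …, x₀]` of variables, with junk `0` for indices `≥ n`. -/
noncomputable def initialVars : ℕ → List (MvPolynomial (Fin n) B)
  | 0 => []
  | m + 1 => (if h : m < n then X ⟨m, h⟩ else 0) :: initialVars m

lemma initialVars_succ {m : ℕ} (h : m < n) :
    initialVars n B (m + 1) = X ⟨m, h⟩ :: initialVars n B m := by
  rw [initialVars, dif_pos h]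

lemma map_rename_initialVars (σ : Fin n → Fin n) (m : ℕ)
    (hσ : ∀ i : Fin n, (i : ℕ) < m → σ i = i) :
    (initialVars n B m).map (rename σ) = initialVars n B m := by
  induction m with
  | zero => rfl
  | succ m ih =>
    rw [initialVars, List.map_cons, ih fun i hi => hσ i (by omega)]
    split_ifs with h
    · rw [rename_X, hσ _ (Nat.lt_succ_self m)]
    · rw [map_zero]

variable (n) in
/-- The divided difference `f[x₀, …, xₘ]` of `f = ∑_{j ≤ d} c_j t^j`. -/
noncomputable def dividedDiff (c : ℕ → B) (d m : ℕ) : MvPolynomial (Fin n) B :=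
  ∑ j ∈ Finset.range (d + 1 - m), C (c (j + m)) * (initialVars n B (m + 1)).hsymm j

lemma dividedDiff_zero (c : ℕ → B) (d : ℕ) (h : 0 < n) :
    dividedDiff n c d 0 = ∑ j ∈ Finset.range (d + 1), C (c j) * X ⟨0, h⟩ ^ j := by
  rw [dividedDiff, initialVars_succ h]
  simp [initialVars, List.hsymm_singleton]

lemma dividedDiff_self (c : ℕ → B) (d : ℕ) : dividedDiff n c d d = C (c d) := by
  simp [dividedDiff]

lemma dividedDiff_sub_rename_swap (c : ℕ → B) {d m : ℕ} (hk : m + 1 < n) (hm : m + 1 ≤ d) :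
    dividedDiff n c d m - rename (Equiv.swap ⟨m, by omega⟩ ⟨m + 1, hk⟩) (dividedDiff n c d m)
      = (X ⟨m, by omega⟩ - X ⟨m + 1, hk⟩) * dividedDiff n c d (m + 1) := by
  have hfix : (initialVars n B m).map (rename (Equiv.swap ⟨m, by omega⟩ ⟨m + 1, hk⟩))
      = initialVars n B m :=
    map_rename_initialVars _ m fun i hi =>
      Equiv.swap_apply_of_ne_of_ne (Fin.ne_of_val_ne (by dsimp only; omega))
        (Fin.ne_of_val_ne (by dsimp only; omega))
  have hren : rename (Equiv.swap ⟨m, by omega⟩ ⟨m + 1, hk⟩) (dividedDiff n c d m)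
      = ∑ j ∈ Finset.range (d + 1 - m),
          C (c (j + m)) * (X ⟨m + 1, hk⟩ :: initialVars n B m).hsymm j := by
    simp only [dividedDiff, map_sum, map_mul, rename_C]
    refine Finset.sum_congr rfl fun j _ => ?_
    rw [← AlgHom.coe_toRingHom, List.map_hsymm, initialVars_succ (by omega), List.map_cons,
      AlgHom.coe_toRingHom, hfix, rename_X, Equiv.swap_apply_left]
  rw [hren, dividedDiff, dividedDiff, initialVars_succ hk, initialVars_succ (by omega),
    show d + 1 - m = d - m + 1 by omega, List.sum_mul_hsymm_cons_sub,
    show d + 1 - (m + 1) = d - m by omega]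
  simp only [add_assoc, add_comm 1 m]

end DividedDifference

theorem stmt16_general {B : Type*} [CommRing B]
    {n : ℕ} (d : ℕ) (hd : d < n)
    (sw D : ∀ k : ℕ, k + 1 < n → MvPolynomial (Fin n) B → MvPolynomial (Fin n) B)
    (hsw : ∀ (k : ℕ) (hk : k + 1 < n) (a : MvPolynomial (Fin n) B),
      sw k hk a =
        rename ⇑(Equiv.swap (⟨k, Nat.lt_of_succ_lt hk⟩ : Fin n) ⟨k + 1, hk⟩) a)
    (hD : ∀ (k : ℕ) (hk : k + 1 < n) (a : MvPolynomial (Fin n) B),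
      (X (⟨k, Nat.lt_of_succ_lt hk⟩ : Fin n) - X ⟨k + 1, hk⟩) * D k hk a
        = sw k hk a - a)
    (K : Set (MvPolynomial (Fin n) B))
    (hKsw : ∀ (k : ℕ) (hk : k + 1 < n) (a : MvPolynomial (Fin n) B),
      a ∈ K → sw k hk a ∈ K)
    (hKD : ∀ (k : ℕ) (hk : k + 1 < n) (a : MvPolynomial (Fin n) B),
      a ∈ K → D k hk a ∈ K)
    (c : ℕ → B)
    (hf : (∑ j ∈ Finset.range (d + 1),
        C (c j) * X (⟨0, Nat.lt_of_le_of_lt (Nat.zero_le d) hd⟩ : Fin n) ^ j)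
        ∈ K) :
    C (c d) ∈ K := by
  have hstep : ∀ m (hk : m + 1 < n), m + 1 ≤ d →
      D m hk (sw m hk (dividedDiff n c d m)) = dividedDiff n c d (m + 1) := by
    intro m hk hm
    -- `∂ₘ ∘ sₘ = -∂ₘ`, which absorbs the sign `(-1)ᵈ`.
    refine isLeftRegular_X_sub_X (R := B) (i := ⟨m, Nat.lt_of_succ_lt hk⟩) (j := ⟨m + 1, hk⟩)
      (by simp) ?_
    beta_reduce
    rw [hD, hsw, hsw, rename_swap_rename_swap, dividedDiff_sub_rename_swap c hk hm]
  have hK : ∀ m ≤ d, dividedDiff n c d m ∈ K := by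
    intro m hm
    induction m with
    | zero => rwa [dividedDiff_zero]
    | succ m ih =>
      rw [← hstep m (by omega) hm]
      exact hKD _ _ _ (hKsw _ _ _ (ih (by omega)))
  simpa only [dividedDiff_self] using hK d le_rfl

/-- Let `B` be a commutative algebra over a field `F`, and consider
`B ⊗ F[x₁,…,xₙ] = B[x₁,…,xₙ]`. Suppose `K` is a subset stable under the
transposition operators `s_k` and the difference operators `∂_k`
(characterized by `(x_k − x_{k+1})·∂_k(a) = s_k(a) − a`). If a polynomial
`f(x₁) = Σ_{j=0}^{d} c_j x₁^j` with coefficients `c_j ∈ B` and `d < n`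
belongs to `K`, then the top coefficient `c_d` (as a constant) belongs
to `K`. -/
theorem stmt16 {F : Type*} [Field F] {B : Type*} [CommRing B] [Algebra F B]
    {n : ℕ} (d : ℕ) (hd : d < n)
    (sw D : ∀ k : ℕ, k + 1 < n → MvPolynomial (Fin n) B → MvPolynomial (Fin n) B)
    (hsw : ∀ (k : ℕ) (hk : k + 1 < n) (a : MvPolynomial (Fin n) B),
      sw k hk a =
        rename ⇑(Equiv.swap (⟨k, Nat.lt_of_succ_lt hk⟩ : Fin n) ⟨k + 1, hk⟩) a)
    (hD : ∀ (k : ℕ) (hk : k + 1 < n) (a : MvPolynomial (Fin n) B),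
      (X (⟨k, Nat.lt_of_succ_lt hk⟩ : Fin n) - X ⟨k + 1, hk⟩) * D k hk a
        = sw k hk a - a)
    (K : Set (MvPolynomial (Fin n) B))
    (hKsw : ∀ (k : ℕ) (hk : k + 1 < n) (a : MvPolynomial (Fin n) B),
      a ∈ K → sw k hk a ∈ K)
    (hKD : ∀ (k : ℕ) (hk : k + 1 < n) (a : MvPolynomial (Fin n) B),
      a ∈ K → D k hk a ∈ K)
    (c : ℕ → B)
    (hf : (∑ j ∈ Finset.range (d + 1),
        C (c j) * X (⟨0, Nat.lt_of_le_of_lt (Nat.zero_le d) hd⟩ : Fin n) ^ j)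
        ∈ K) :
    C (c d) ∈ K :=
  stmt16_general d hd sw D hsw hD K hKsw hKD c hf
end

section
/- Let 𝒯 be an R-linear abelian monoidal category with ⊗ bi-exact. Suppose 0 → X' → X → X'' → 0 and 0 → Y'' → Y → Y' → 0 are exact, and suppose given ε' : X'⊗Y' → 𝟙, ε : X⊗Y → 𝟙, ε'' : X''⊗Y'' → 𝟙 and η' : 𝟙 → Y'⊗X', η : 𝟙 → Y⊗X, η'' : 𝟙 → Y''⊗X'' making the natural comparison diagrams commute up to invertible scalar multiples. If (ε', η') and (ε'', η'') are quasi-adjunctions, then (ε, η) is a quasi-adjunction. -/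
open CategoryTheory MonoidalCategory Limits

/-!
Conjugated by unitors, the two composites of the quasi-adjunction condition become endomorphisms
of `X` and of `Y`. Rescaling `ε', η', ε'', η''` by the given units makes the comparison squares
commute on the nose, and then these endomorphisms commute with the maps of the two short exact
sequences. They are thus middle components of endomorphisms of the sequences whose outer
components are, up to units, the isomorphisms for `(ε', η')` and `(ε'', η'')`; the five lemma
finishes.
-/

namespace CategoryTheory.MonoidalCategory

section Monoidal

variable {C : Type*} [Category C] [MonoidalCategory C]

def leftZigzag {X Y : C} (ε : X ⊗ Y ⟶ 𝟙_ C) (η : 𝟙_ C ⟶ Y ⊗ X) : X ⟶ X :=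
  (ρ_ X).inv ≫ (X ◁ η ≫ (α_ X Y X).inv ≫ ε ▷ X) ≫ (λ_ X).hom

def rightZigzag {X Y : C} (ε : X ⊗ Y ⟶ 𝟙_ C) (η : 𝟙_ C ⟶ Y ⊗ X) : Y ⟶ Y :=
  (λ_ Y).inv ≫ (η ▷ Y ≫ (α_ Y X Y).hom ≫ Y ◁ ε) ≫ (ρ_ Y).hom

lemma isIso_leftZigzag_iff {X Y : C} (ε : X ⊗ Y ⟶ 𝟙_ C) (η : 𝟙_ C ⟶ Y ⊗ X) :
    IsIso (leftZigzag ε η) ↔ IsIso (X ◁ η ≫ (α_ X Y X).inv ≫ ε ▷ X) := by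
  rw [leftZigzag, isIso_comp_left_iff, isIso_comp_right_iff]

lemma isIso_rightZigzag_iff {X Y : C} (ε : X ⊗ Y ⟶ 𝟙_ C) (η : 𝟙_ C ⟶ Y ⊗ X) :
    IsIso (rightZigzag ε η) ↔ IsIso (η ▷ Y ≫ (α_ Y X Y).hom ≫ Y ◁ ε) := by
  rw [rightZigzag, isIso_comp_left_iff, isIso_comp_right_iff]

variable {A B D E : C} (f : A ⟶ B) (g : D ⟶ E)
  {εA : A ⊗ E ⟶ 𝟙_ C} {ηA : 𝟙_ C ⟶ E ⊗ A} {εB : B ⊗ D ⟶ 𝟙_ C} {ηB : 𝟙_ C ⟶ D ⊗ B}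

lemma leftZigzag_comp_eq_comp_leftZigzag
    (hε : f ▷ D ≫ εB = A ◁ g ≫ εA) (hη : ηA ≫ E ◁ f = ηB ≫ g ▷ B) :
    leftZigzag εA ηA ≫ f = f ≫ leftZigzag εB ηB := by
  simp only [leftZigzag, Category.assoc]
  rw [rightUnitor_inv_naturality_assoc, ← whisker_exchange_assoc,
    associator_inv_naturality_left_assoc, ← comp_whiskerRight_assoc, hε, comp_whiskerRight,
    Category.assoc, ← associator_inv_naturality_middle_assoc, ← whiskerLeft_comp_assoc, ← hη,
    whiskerLeft_comp, Category.assoc, associator_inv_naturality_right_assoc,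
    whisker_exchange_assoc, leftUnitor_naturality]

lemma rightZigzag_comp_eq_comp_rightZigzag
    (hε : f ▷ D ≫ εB = A ◁ g ≫ εA) (hη : ηA ≫ E ◁ f = ηB ≫ g ▷ B) :
    rightZigzag εB ηB ≫ g = g ≫ rightZigzag εA ηA := by
  simp only [rightZigzag, Category.assoc]
  rw [← rightUnitor_naturality, whisker_exchange_assoc,
    ← associator_naturality_left_assoc, ← comp_whiskerRight_assoc, ← hη, comp_whiskerRight,
    Category.assoc, associator_naturality_middle_assoc, ← whiskerLeft_comp_assoc, hε,
    whiskerLeft_comp, Category.assoc, ← associator_naturality_right_assoc,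
    ← whisker_exchange_assoc, ← leftUnitor_inv_naturality_assoc]

end Monoidal

section Linear

variable {R : Type*} [CommRing R] {C : Type*} [Category C] [Preadditive C] [Linear R C]

instance isIso_units_smul {X Y : C} (c : Rˣ) (φ : X ⟶ Y) [IsIso φ] : IsIso (c • φ) :=
  ⟨c⁻¹ • inv φ, by simp, by simp⟩

variable [MonoidalCategory C] [MonoidalPreadditive C] [MonoidalLinear R C]

lemma leftZigzag_units_smul {X Y : C} (a b : Rˣ) (ε : X ⊗ Y ⟶ 𝟙_ C) (η : 𝟙_ C ⟶ Y ⊗ X) :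
    leftZigzag (a • ε) (b • η) = (a * b) • leftZigzag ε η := by
  simp [Units.smul_def, leftZigzag, smul_smul]

lemma rightZigzag_units_smul {X Y : C} (a b : Rˣ) (ε : X ⊗ Y ⟶ 𝟙_ C) (η : 𝟙_ C ⟶ Y ⊗ X) :
    rightZigzag (a • ε) (b • η) = (a * b) • rightZigzag ε η := by
  simp [Units.smul_def, rightZigzag, smul_smul]

end Linear

end CategoryTheory.MonoidalCategory

lemma CategoryTheory.ShortComplex.ShortExact.isIso_of_comm {C : Type*} [Category C]
    [Preadditive C] [Balanced C] {S : ShortComplex C} (hS : S.ShortExact) {a : S.X₁ ⟶ S.X₁} {u : S.X₂ ⟶ S.X₂}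
    {b : S.X₃ ⟶ S.X₃} (h₁ : a ≫ S.f = S.f ≫ u) (h₂ : u ≫ S.g = S.g ≫ b) (ha : IsIso a)
    (hb : IsIso b) : IsIso u :=
  ShortComplex.isIso₂_of_shortExact_of_isIso₁₃' (S₁ := S) (S₂ := S) ⟨a, u, b, h₁, h₂⟩ hS hS ha hb

/-- In an `R`-linear abelian monoidal category with bi-exact `⊗`, given short
exact sequences `0 → X' → X → X'' → 0` and `0 → Y'' → Y → Y' → 0`, and
(co)evaluation morphisms `ε', ε, ε''` and `η', η, η''` making the comparison
diagrams commute up to invertible scalars, if `(ε', η')` and `(ε'', η'')` are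
quasi-adjunctions then so is `(ε, η)`. -/
theorem stmt19 {R : Type*} [CommRing R] {C : Type*} [Category C] [Abelian C]
    [CategoryTheory.Linear R C] [MonoidalCategory C] [MonoidalPreadditive C]
    [MonoidalLinear R C]
    [∀ X : C, PreservesFiniteLimits (tensorLeft X)]
    [∀ X : C, PreservesFiniteColimits (tensorLeft X)]
    [∀ X : C, PreservesFiniteLimits (tensorRight X)]
    [∀ X : C, PreservesFiniteColimits (tensorRight X)]
    {X' X X'' Y' Y Y'' : C}
    (f : X' ⟶ X) (f' : X ⟶ X'') (wX : f ≫ f' = 0)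
    (g' : Y'' ⟶ Y) (g : Y ⟶ Y') (wY : g' ≫ g = 0)
    (hX : (ShortComplex.mk f f' wX).ShortExact)
    (hY : (ShortComplex.mk g' g wY).ShortExact)
    (ε' : X' ⊗ Y' ⟶ 𝟙_ C) (ε : X ⊗ Y ⟶ 𝟙_ C) (ε'' : X'' ⊗ Y'' ⟶ 𝟙_ C)
    (η' : 𝟙_ C ⟶ Y' ⊗ X') (η : 𝟙_ C ⟶ Y ⊗ X) (η'' : 𝟙_ C ⟶ Y'' ⊗ X'')
    (hc1 : ∃ c : Rˣ, f ▷ Y ≫ ε = (c : R) • (X' ◁ g ≫ ε'))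
    (hc2 : ∃ c : Rˣ, X ◁ g' ≫ ε = (c : R) • (f' ▷ Y'' ≫ ε''))
    (hc3 : ∃ c : Rˣ, η' ≫ Y' ◁ f = (c : R) • (η ≫ g ▷ X))
    (hc4 : ∃ c : Rˣ, η'' ≫ g' ▷ X'' = (c : R) • (η ≫ Y ◁ f'))
    (hqa' : IsIso (X' ◁ η' ≫ (α_ X' Y' X').inv ≫ ε' ▷ X') ∧
            IsIso (η' ▷ Y' ≫ (α_ Y' X' Y').hom ≫ Y' ◁ ε'))
    (hqa'' : IsIso (X'' ◁ η'' ≫ (α_ X'' Y'' X'').inv ≫ ε'' ▷ X'') ∧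
             IsIso (η'' ▷ Y'' ≫ (α_ Y'' X'' Y'').hom ≫ Y'' ◁ ε'')) :
    IsIso (X ◁ η ≫ (α_ X Y X).inv ≫ ε ▷ X) ∧
    IsIso (η ▷ Y ≫ (α_ Y X Y).hom ≫ Y ◁ ε) := by
  obtain ⟨c₁, hc1⟩ := hc1
  obtain ⟨c₂, hc2⟩ := hc2
  obtain ⟨c₃, hc3⟩ := hc3
  obtain ⟨c₄, hc4⟩ := hc4
  simp only [← Units.smul_def] at hc1 hc2 hc3 hc4
  have hε' : f ▷ Y ≫ ε = X' ◁ g ≫ (c₁ • ε') := by rw [hc1, Linear.comp_units_smul]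
  have hε'' : f' ▷ Y'' ≫ (c₂ • ε'') = X ◁ g' ≫ ε := by rw [hc2, Linear.comp_units_smul]
  have hη' : (c₃⁻¹ • η') ≫ Y' ◁ f = η ≫ g ▷ X := by
    rw [Linear.units_smul_comp, hc3, inv_smul_smul]
  have hη'' : η ≫ Y ◁ f' = (c₄⁻¹ • η'') ≫ g' ▷ X'' := by
    rw [Linear.units_smul_comp, hc4, inv_smul_smul]
  rw [← isIso_leftZigzag_iff, ← isIso_rightZigzag_iff] at hqa' hqa'' ⊢
  obtain ⟨_, _⟩ := hqa'
  obtain ⟨_, _⟩ := hqa''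
  constructor
  · refine hX.isIso_of_comm (leftZigzag_comp_eq_comp_leftZigzag f g hε' hη')
      (leftZigzag_comp_eq_comp_leftZigzag f' g' hε'' hη'') ?_ ?_ <;>
    · rw [leftZigzag_units_smul]; infer_instance
  · refine hY.isIso_of_comm (rightZigzag_comp_eq_comp_rightZigzag f' g' hε'' hη'')
      (rightZigzag_comp_eq_comp_rightZigzag f g hε' hη') ?_ ?_ <;>
    · rw [rightZigzag_units_smul]; infer_instance
end
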